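/- For all real η ≠ 0 and ξ ∈ ℝ, the functions on ℝ³ given by π₀₁(x) = (ξ/(2η)) tanh(η x₂) (1/cosh(η x₁)) (cos²(η x₀) sinh²(η x₁) − sin²(η x₀)), π₀₂(x) = −(1/(2η)) sin(η x₀) cosh(η x₁) + (1/(2η)) sinh(η x₁) (sin(η x₀) tanh(η x₁) − ξ cos²(η x₀)), π₁₂(x) = −(1/(2η)) sinh(η x₁) cos(η x₀) − (ξ/(2η)) sin(η x₀) cos(η x₀) cosh(η x₁), extended antisymmetrically by π_ba = −π_ab and π_aa = 0, satisfy the Jacobi identity for a Poisson bivector: for all x ∈ ℝ³, Σ_{l=0}^{2} ( π_{0l}(x) ∂_l π_{12}(x) + π_{1l}(x) ∂_l π_{20}(x) + π_{2l}(x) ∂_l π_{01}(x) ) = 0, where ∂_l denotes the partial derivative in the variable x_l. Hence these functions define the twisted κ-AdS Poisson homogeneous structure on AdS₃. -/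

import Mathlib

open Real

/-- `π₀₁` for the twisted κ-AdS Poisson structure on AdS₃. -/
noncomputable def pi01 (η ξ : ℝ) (x : Fin 3 → ℝ) : ℝ :=
  (ξ / (2 * η)) * Real.tanh (η * x 2) * (1 / Real.cosh (η * x 1)) *
    ((Real.cos (η * x 0)) ^ 2 * (Real.sinh (η * x 1)) ^ 2 - (Real.sin (η * x 0)) ^ 2)

/-- `π₀₂` for the twisted κ-AdS Poisson structure on AdS₃. -/
noncomputable def pi02 (η ξ : ℝ) (x : Fin 3 → ℝ) : ℝ :=
  -(1 / (2 * η)) * Real.sin (η * x 0) * Real.cosh (η * x 1) +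
    (1 / (2 * η)) * Real.sinh (η * x 1) *
      (Real.sin (η * x 0) * Real.tanh (η * x 1) - ξ * (Real.cos (η * x 0)) ^ 2)

/-- `π₁₂` for the twisted κ-AdS Poisson structure on AdS₃. -/
noncomputable def pi12 (η ξ : ℝ) (x : Fin 3 → ℝ) : ℝ :=
  -(1 / (2 * η)) * Real.sinh (η * x 1) * Real.cos (η * x 0) -
    (ξ / (2 * η)) * Real.sin (η * x 0) * Real.cos (η * x 0) * Real.cosh (η * x 1)

/-- The skew-symmetric bivector matrix `π_ab` of the twisted κ-AdS structure. -/
noncomputable def piKAdS (η ξ : ℝ) (a b : Fin 3) (x : Fin 3 → ℝ) : ℝ :=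
  !![0, pi01 η ξ x, pi02 η ξ x;
     -(pi01 η ξ x), 0, pi12 η ξ x;
     -(pi02 η ξ x), -(pi12 η ξ x), 0] a b

/-! The Jacobiator of a skew-symmetric `3 × 3` matrix of functions is a combination of six
partial derivatives of its entries `π₀₁, π₀₂, π₁₂`. Here `π₀₂` and `π₁₂` do not depend on `x₂`,
so only four partial derivatives survive; each is computed along a coordinate line. The
Jacobiator then becomes a rational expression in `sin, cos` of `η x₀` and `sinh, cosh` of `η x₁`
which vanishes modulo `sin² + cos² = 1` and `cosh² - sinh² = 1`. -/

open Function

section PartialDerivative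

variable {𝕜 ι F : Type*} [NontriviallyNormedField 𝕜] [Fintype ι] [DecidableEq ι]
  [NormedAddCommGroup F] [NormedSpace 𝕜 F] {f : (ι → 𝕜) → F} {x : ι → 𝕜} {i : ι}

theorem fderiv_apply_single_eq_deriv_update (hf : DifferentiableAt 𝕜 f x) :
    fderiv 𝕜 f x (Pi.single i 1) = deriv (fun t => f (update x i t)) (x i) :=
  (hf.hasFDerivAt.comp_hasDerivAt_of_eq (x i) (hasDerivAt_update x i (x i))
    (update_eq_self i x).symm).deriv.symm

theorem fderiv_apply_single_eq_zero_of_update_eq (hf : ∀ t, f (update x i t) = f x) :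
    fderiv 𝕜 f x (Pi.single i 1) = 0 := by
  by_cases hd : DifferentiableAt 𝕜 f x
  · simp [fderiv_apply_single_eq_deriv_update hd, hf]
  · simp [fderiv_zero_of_not_differentiableAt hd]

end PartialDerivative

section Bivector

variable {𝕜 : Type*} [NontriviallyNormedField 𝕜]

def bivector3 (f g h : (Fin 3 → 𝕜) → 𝕜) (a b : Fin 3) (x : Fin 3 → 𝕜) : 𝕜 :=
  !![0, f x, g x; -(f x), 0, h x; -(g x), -(h x), 0] a b

local notation "∂" i:max f:max x:max => fderiv 𝕜 f x (Pi.single i 1)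

theorem jacobi_sum_bivector3 (f g h : (Fin 3 → 𝕜) → 𝕜) (x : Fin 3 → 𝕜) :
    ∑ l : Fin 3,
      (bivector3 f g h 0 l x * fderiv 𝕜 (bivector3 f g h 1 2) x (Pi.single l 1) +
       bivector3 f g h 1 l x * fderiv 𝕜 (bivector3 f g h 2 0) x (Pi.single l 1) +
       bivector3 f g h 2 l x * fderiv 𝕜 (bivector3 f g h 0 1) x (Pi.single l 1)) =
      f x * (∂ 0 g x + ∂ 1 h x) + g x * (∂ 2 h x - ∂ 0 f x) - h x * (∂ 2 g x + ∂ 1 f x) := by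
  have e01 : bivector3 f g h 0 1 = f := rfl
  have e12 : bivector3 f g h 1 2 = h := rfl
  have e20 : bivector3 f g h 2 0 = fun y => -g y := rfl
  simp only [Fin.sum_univ_three, e01, e12, e20, fderiv_fun_neg]
  simp [bivector3]
  ring

end Bivector

section Components

variable (η ξ : ℝ) (x : Fin 3 → ℝ)

theorem differentiableAt_pi01 : DifferentiableAt ℝ (pi01 η ξ) x := by
  unfold pi01
  simp only [tanh_eq_sinh_div_cosh]
  fun_prop (disch := exact (cosh_pos _).ne')

theorem differentiableAt_pi02 : DifferentiableAt ℝ (pi02 η ξ) x := by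
  unfold pi02
  simp only [tanh_eq_sinh_div_cosh]
  fun_prop (disch := exact (cosh_pos _).ne')

theorem differentiableAt_pi12 : DifferentiableAt ℝ (pi12 η ξ) x := by
  unfold pi12
  fun_prop

theorem fderiv_pi01_single_zero :
    fderiv ℝ (pi01 η ξ) x (Pi.single 0 1) =
      -(ξ / (2 * η)) * η * 2 * tanh (η * x 2) * sin (η * x 0) * cos (η * x 0) *
        cosh (η * x 1) := by
  rw [fderiv_apply_single_eq_deriv_update (differentiableAt_pi01 η ξ x)]
  simp only [pi01, update_self, ne_eq, Fin.reduceEq, not_false_eq_true, update_of_ne]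
  apply HasDerivAt.deriv
  have hs := ((hasDerivAt_id' (x 0)).const_mul η).sin
  have hc := ((hasDerivAt_id' (x 0)).const_mul η).cos
  refine ((((hc.fun_pow 2).mul_const (sinh (η * x 1) ^ 2)).fun_sub (hs.fun_pow 2)).const_mul
    (ξ / (2 * η) * tanh (η * x 2) * (1 / cosh (η * x 1)))).congr_deriv ?_
  have hC := (cosh_pos (η * x 1)).ne'
  generalize ξ / (2 * η) = k
  field_simp
  linear_combination 2 * k * η * tanh (η * x 2) * cos (η * x 0) * sin (η * x 0) *
    cosh_sq_sub_sinh_sq (η * x 1)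

theorem fderiv_pi01_single_one :
    fderiv ℝ (pi01 η ξ) x (Pi.single 1 1) =
      ξ / (2 * η) * η * tanh (η * x 2) * sinh (η * x 1) *
        (cos (η * x 0) ^ 2 * cosh (η * x 1) ^ 2 + 1) / cosh (η * x 1) ^ 2 := by
  rw [fderiv_apply_single_eq_deriv_update (differentiableAt_pi01 η ξ x)]
  simp only [pi01, update_self, ne_eq, Fin.reduceEq, not_false_eq_true, update_of_ne]
  apply HasDerivAt.deriv
  have hs := ((hasDerivAt_id' (x 1)).const_mul η).sinh
  have hc := ((hasDerivAt_id' (x 1)).const_mul η).cosh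
  have hC := (cosh_pos (η * x 1)).ne'
  refine ((((hasDerivAt_const _ 1).fun_div hc hC).const_mul
    (ξ / (2 * η) * tanh (η * x 2))).fun_mul
      (((hs.fun_pow 2).const_mul (cos (η * x 0) ^ 2)).sub_const (sin (η * x 0) ^ 2))).congr_deriv ?_
  generalize ξ / (2 * η) = k
  field_simp
  linear_combination k * η * tanh (η * x 2) * sinh (η * x 1) *
    (cos (η * x 0) ^ 2 * cosh_sq_sub_sinh_sq (η * x 1) + sin_sq_add_cos_sq (η * x 0))

theorem fderiv_pi02_single_zero :
    fderiv ℝ (pi02 η ξ) x (Pi.single 0 1) =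
      1 / (2 * η) * η * cos (η * x 0) *
        (2 * ξ * sin (η * x 0) * sinh (η * x 1) - 1 / cosh (η * x 1)) := by
  rw [fderiv_apply_single_eq_deriv_update (differentiableAt_pi02 η ξ x)]
  simp only [pi02, update_self, ne_eq, Fin.reduceEq, not_false_eq_true, update_of_ne]
  apply HasDerivAt.deriv
  have hs := ((hasDerivAt_id' (x 0)).const_mul η).sin
  have hc := ((hasDerivAt_id' (x 0)).const_mul η).cos
  refine (((hs.const_mul (-(1 / (2 * η)))).mul_const (cosh (η * x 1))).fun_add
    (((hs.mul_const (tanh (η * x 1))).fun_sub ((hc.fun_pow 2).const_mul ξ)).const_mul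
      (1 / (2 * η) * sinh (η * x 1)))).congr_deriv ?_
  have hC := (cosh_pos (η * x 1)).ne'
  rw [tanh_eq_sinh_div_cosh]
  generalize 1 / (2 * η) = k
  field_simp
  linear_combination -k * η * cos (η * x 0) * cosh_sq_sub_sinh_sq (η * x 1)

theorem fderiv_pi12_single_one :
    fderiv ℝ (pi12 η ξ) x (Pi.single 1 1) =
      -(1 / (2 * η)) * η * cos (η * x 0) *
        (cosh (η * x 1) + ξ * sin (η * x 0) * sinh (η * x 1)) := by
  rw [fderiv_apply_single_eq_deriv_update (differentiableAt_pi12 η ξ x)]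
  simp only [pi12, update_self, ne_eq, Fin.reduceEq, not_false_eq_true, update_of_ne]
  apply HasDerivAt.deriv
  have hs := ((hasDerivAt_id' (x 1)).const_mul η).sinh
  have hc := ((hasDerivAt_id' (x 1)).const_mul η).cosh
  refine (((hs.const_mul (-(1 / (2 * η)))).mul_const (cos (η * x 0))).fun_sub
    (hc.const_mul (ξ / (2 * η) * sin (η * x 0) * cos (η * x 0)))).congr_deriv ?_
  ring

theorem fderiv_pi02_single_two : fderiv ℝ (pi02 η ξ) x (Pi.single 2 1) = 0 :=
  fderiv_apply_single_eq_zero_of_update_eq fun t => by simp [pi02]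

theorem fderiv_pi12_single_two : fderiv ℝ (pi12 η ξ) x (Pi.single 2 1) = 0 :=
  fderiv_apply_single_eq_zero_of_update_eq fun t => by simp [pi12]

end Components

theorem twisted_kappa_AdS_jacobi (η ξ : ℝ) :
    ∀ x : Fin 3 → ℝ,
      ∑ l : Fin 3,
        (piKAdS η ξ 0 l x * fderiv ℝ (piKAdS η ξ 1 2) x (Pi.single l 1) +
         piKAdS η ξ 1 l x * fderiv ℝ (piKAdS η ξ 2 0) x (Pi.single l 1) +
         piKAdS η ξ 2 l x * fderiv ℝ (piKAdS η ξ 0 1) x (Pi.single l 1)) = 0 := by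
  intro x
  rw [show piKAdS η ξ = bivector3 (pi01 η ξ) (pi02 η ξ) (pi12 η ξ) from rfl,
    jacobi_sum_bivector3, fderiv_pi01_single_zero, fderiv_pi01_single_one,
    fderiv_pi02_single_zero, fderiv_pi02_single_two, fderiv_pi12_single_one,
    fderiv_pi12_single_two]
  unfold pi01 pi02 pi12
  simp only [div_eq_mul_one_div ξ (2 * η), tanh_eq_sinh_div_cosh (η * x 1)]
  generalize 1 / (2 * η) = k
  have hC := (cosh_pos (η * x 1)).ne'
  field_simp
  set s := sin (η * x 0)
  set c := cos (η * x 0)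
  set S := sinh (η * x 1)
  set C := cosh (η * x 1)
  linear_combination -k ^ 2 * ξ * η * tanh (η * x 2) * c *
    ((s ^ 2 + 2 * s ^ 2 * C ^ 2 + ξ * S * s * C * c ^ 2) * cosh_sq_sub_sinh_sq (η * x 1) +
      (S ^ 2 + ξ * S * s * C) * sin_sq_add_cos_sq (η * x 0))
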